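/- arXiv:1911.04961 — 3 statements merged into one kernel-verified Lean document; each statement's English description precedes it below -/
import Mathlib

section
/- Let G be a 3-γc-critical graph and let b1, b2, b3 be three pairwise non-adjacent vertices of G. Then every minimum connected dominating set of G + b1b2 has the form {b1, b} or {b2, b} for some vertex b of G. -/
open SimpleGraph Finset

variable {V : Type*}

/-- The graph `G` with the extra edge `uv` added. -/
def SimpleGraph.addEdge (G : SimpleGraph V) (u v : V) : SimpleGraph V :=
  G ⊔ SimpleGraph.fromEdgeSet {s(u, v)}

/-- `D` is a connected dominating set of `G`. -/
def SimpleGraph.IsCDS (G : SimpleGraph V) (D : Set V) : Prop :=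
  (∀ v : V, v ∈ D ∨ ∃ u ∈ D, G.Adj u v) ∧ (G.induce D).Connected

/-- The connected domination number. -/
noncomputable def SimpleGraph.cdn [Fintype V] (G : SimpleGraph V) : ℕ :=
  sInf {n | ∃ D : Finset V, D.card = n ∧ G.IsCDS ↑D}

/-- `G` is a `3`-`γ_c`-critical graph. -/
def SimpleGraph.IsCritical3 [Fintype V] (G : SimpleGraph V) : Prop :=
  G.Connected ∧ G.cdn = 3 ∧
    ∀ u v : V, u ≠ v → ¬G.Adj u v → (G.addEdge u v).cdn < 3

/-- `s` is an independent set of `G`. -/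
def SimpleGraph.IsIndepSet' (G : SimpleGraph V) (s : Set V) : Prop :=
  s.Pairwise (fun a b => ¬G.Adj a b)

/-- The independence number. -/
noncomputable def SimpleGraph.indepNum' [Fintype V] (G : SimpleGraph V) : ℕ :=
  sSup {n | ∃ s : Finset V, G.IsIndepSet' ↑s ∧ s.card = n}

/-- `S` is a vertex cut: removing it leaves a non-connected graph. -/
def SimpleGraph.IsVertexCut [Fintype V] (G : SimpleGraph V) (S : Finset V) : Prop :=
  ¬(G.induce ((↑S : Set V)ᶜ)).Connected

/-- The vertex connectivity: minimum size of a vertex cut. -/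
noncomputable def SimpleGraph.conn [Fintype V] (G : SimpleGraph V) : ℕ :=
  sInf {n | ∃ S : Finset V, S.card = n ∧ G.IsVertexCut S}

/-!
Adding the edge `b₁b₂` drops the connected domination number below `3`, so a minimum connected
dominating set `D` of `G + b₁b₂` has at most two vertices. If `D` avoided both `b₁` and `b₂`, the
new edge would be used neither for domination from `D` nor inside `D`, so `D` would be a connected
dominating set of `G` itself, contradicting `γc(G) = 3`.
-/

theorem Finset.exists_eq_pair_of_mem_of_card_le_two {α : Type*} [DecidableEq α] {s : Finset α}
    {a : α} (ha : a ∈ s) (hs : s.card ≤ 2) : ∃ b, s = {a, b} := by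
  rcases (s.erase a).eq_empty_or_nonempty with h | h
  · exact ⟨a, by rw [← insert_erase ha, h]; simp⟩
  · have hcard : (s.erase a).card = 1 := by
      have hpos := h.card_pos
      rw [card_erase_of_mem ha] at hpos ⊢
      omega
    obtain ⟨b, hb⟩ := card_eq_one.mp hcard
    exact ⟨b, by rw [← insert_erase ha, hb]⟩

namespace SimpleGraph

variable {G : SimpleGraph V}

lemma IsCDS.cdn_le_card [Fintype V] {D : Finset V} (hD : G.IsCDS ↑D) : G.cdn ≤ D.card :=
  Nat.sInf_le ⟨D, rfl, hD⟩

lemma IsCDS.card_le_cdn [Fintype V] {D : Finset V} (hD : G.IsCDS ↑D)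
    (hmin : ∀ D' : Finset V, G.IsCDS ↑D' → D.card ≤ D'.card) : D.card ≤ G.cdn := by
  obtain ⟨D₀, hD₀card, hD₀⟩ := Nat.sInf_mem
    (⟨D.card, D, rfl, hD⟩ : {n | ∃ D' : Finset V, D'.card = n ∧ G.IsCDS ↑D'}.Nonempty)
  exact (hmin D₀ hD₀).trans_eq hD₀card

lemma adj_of_addEdge_adj {u v x y : V} (hxu : x ≠ u) (hxv : x ≠ v)
    (h : (G.addEdge u v).Adj x y) : G.Adj x y := by
  refine h.resolve_right fun h => ?_
  simp only [fromEdgeSet_adj, Set.mem_singleton_iff, Sym2.eq_iff] at h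
  exact h.1.elim (fun h => hxu h.1) (fun h => hxv h.1)

lemma IsCDS.of_addEdge {u v : V} {D : Set V} (hD : (G.addEdge u v).IsCDS D)
    (hu : u ∉ D) (hv : v ∉ D) : G.IsCDS D := by
  have hadj : ∀ x ∈ D, ∀ y, (G.addEdge u v).Adj x y → G.Adj x y := fun x hx _ =>
    adj_of_addEdge_adj (ne_of_mem_of_not_mem hx hu) (ne_of_mem_of_not_mem hx hv)
  refine ⟨fun y => (hD.1 y).imp_right fun ⟨x, hx, hxy⟩ => ⟨x, hx, hadj x hx y hxy⟩, ?_⟩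
  have hinduce : (G.addEdge u v).induce D = G.induce D := by
    ext a b
    exact ⟨hadj a a.2 b, Or.inl⟩
  exact hinduce ▸ hD.2

end SimpleGraph

theorem stmt_3_general {V : Type*} [Fintype V] [DecidableEq V] (G : SimpleGraph V)
    (hG : G.IsCritical3) (b1 b2 : V)
    (h12 : b1 ≠ b2)
    (ha12 : ¬G.Adj b1 b2)
    (D : Finset V) (hD : (G.addEdge b1 b2).IsCDS ↑D)
    (hmin : ∀ D' : Finset V, (G.addEdge b1 b2).IsCDS ↑D' → D.card ≤ D'.card) :
    ∃ b : V, D = {b1, b} ∨ D = {b2, b} := by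
  have hcard : D.card ≤ 2 := by
    have hcdn_lt := hG.2.2 b1 b2 h12 ha12
    have hcard_le := hD.card_le_cdn hmin
    omega
  by_cases hb1 : b1 ∈ D
  · obtain ⟨b, hb⟩ := exists_eq_pair_of_mem_of_card_le_two hb1 hcard
    exact ⟨b, Or.inl hb⟩
  by_cases hb2 : b2 ∈ D
  · obtain ⟨b, hb⟩ := exists_eq_pair_of_mem_of_card_le_two hb2 hcard
    exact ⟨b, Or.inr hb⟩
  have hcdn_le := (hD.of_addEdge (by exact_mod_cast hb1) (by exact_mod_cast hb2)).cdn_le_card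
  have hcdn : G.cdn = 3 := hG.2.1
  omega

theorem stmt_3 {V : Type*} [Fintype V] [DecidableEq V] (G : SimpleGraph V)
    (hG : G.IsCritical3) (b1 b2 b3 : V)
    (h12 : b1 ≠ b2) (h13 : b1 ≠ b3) (h23 : b2 ≠ b3)
    (ha12 : ¬G.Adj b1 b2) (ha13 : ¬G.Adj b1 b3) (ha23 : ¬G.Adj b2 b3)
    (D : Finset V) (hD : (G.addEdge b1 b2).IsCDS ↑D)
    (hmin : ∀ D' : Finset V, (G.addEdge b1 b2).IsCDS ↑D' → D.card ≤ D'.card) :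
    ∃ b : V, D = {b1, b} ∨ D = {b2, b} :=
  stmt_3_general G hG b1 b2 h12 ha12 D hD hmin
end

section
/- Let G be a 3-γc-critical graph, S a minimum vertex cut of G, and suppose G − S has two parts H1 and H2 (each a union of components) with |H1| ≥ 2 and |H2| ≥ 2. Let I be an independent set of G with |I ∩ (H1 ∪ H2)| = p ≥ 3. Then |S \ I| ≥ p − 1. -/
open SimpleGraph Finset

variable {V : Type*}

/-
Fix two vertices a ≠ b of X = I ∩ (H1 ∪ H2). Criticality gives a connected dominating set D of
G + ab with |D| ≤ 2, and D must contain a or b, say a, since otherwise it would serve in G.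
As H1 and H2 are separated and each has a vertex other than b, D cannot lie on the side of a, so
D = {a, t} with t ∈ S; a third vertex of X rules out t = b, and minimality of γc(G) = 3 forces
t ≁ b. Independence of I then makes b the unique non-neighbour of t in I. Thus every pair in X
contains the unique non-neighbour in I of some t ∈ S \ I, so at most one vertex of X is not of
this form, and those that are give distinct vertices of S \ I: |S \ I| ≥ p - 1.
-/

theorem Finset.card_le_card_add_one_of_forall_pair {α β : Type*} [DecidableEq α]
    [DecidableEq β] (X : Finset α) (T : Finset β) (f : β → Finset α)
    (h : ∀ a ∈ X, ∀ b ∈ X, a ≠ b → ∃ t ∈ T, f t = {a} ∨ f t = {b}) :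
    X.card ≤ T.card + 1 := by
  have hhit : (X.filter fun x => {x} ∈ T.image f).card ≤ T.card :=
    (card_le_card_of_injOn singleton (fun x hx => (mem_filter.1 hx).2)
      singleton_injective.injOn).trans card_image_le
  have hmiss : (X.filter fun x => {x} ∉ T.image f).card ≤ 1 := by
    refine card_le_one.2 fun a ha b hb => by_contra fun hab => ?_
    simp only [mem_filter, mem_image] at ha hb
    obtain ⟨t, ht, hta | htb⟩ := h a ha.1 b hb.1 hab
    exacts [ha.2 ⟨t, ht, hta⟩, hb.2 ⟨t, ht, htb⟩]
  have := card_filter_add_card_filter_not (s := X) fun x => {x} ∈ T.image f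
  omega

theorem Finset.eq_singleton_or_eq_pair_of_card_le_two {α : Type*} [DecidableEq α]
    {s : Finset α} {a : α} (ha : a ∈ s) (hs : s.card ≤ 2) :
    s = {a} ∨ ∃ t ≠ a, s = {a, t} := by
  have hrest : (s.erase a).card ≤ 1 := by rw [card_erase_of_mem ha]; omega
  rw [← insert_erase ha]
  obtain he | ⟨t, ht⟩ := (s.erase a).eq_empty_or_nonempty
  · simp [he]
  · refine Or.inr ⟨t, ne_of_mem_erase ht, ?_⟩
    rw [eq_singleton_iff_unique_mem.2 ⟨ht, fun y hy => card_le_one.1 hrest y hy t ht⟩]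

namespace SimpleGraph

variable {G : SimpleGraph V} {u v x y : V}

theorem Connected.adj_of_induce_pair (h : (G.induce {x, y}).Connected) (hxy : x ≠ y) :
    G.Adj x y := by
  obtain ⟨p⟩ := h.preconnected ⟨x, by simp⟩ ⟨y, by simp⟩
  cases p with
  | nil => exact absurd rfl hxy
  | @cons _ w _ hadj _ =>
    obtain ⟨w, hw | hw⟩ := w
    · subst hw; exact absurd hadj (G.induce _).irrefl
    · simp only [Set.mem_singleton_iff] at hw
      subst hw; exact hadj

theorem addEdge_comm (G : SimpleGraph V) (u v : V) : G.addEdge u v = G.addEdge v u := by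
  rw [addEdge, addEdge, Sym2.eq_swap]

theorem le_addEdge (G : SimpleGraph V) (u v : V) : G ≤ G.addEdge u v := le_sup_left

theorem addEdge_adj :
    (G.addEdge u v).Adj x y ↔ G.Adj x y ∨ (s(x, y) = s(u, v) ∧ x ≠ y) := by
  simp only [addEdge, sup_adj, fromEdgeSet_adj, Set.mem_singleton_iff]

theorem adj_of_addEdge_adj_of_ne_left (h : (G.addEdge u v).Adj x y) (hu : x ≠ u)
    (hv : x ≠ v) : G.Adj x y := by
  rcases addEdge_adj.1 h with h | ⟨he, -⟩
  · exact h
  · rcases Sym2.eq_iff.1 he with ⟨rfl, -⟩ | ⟨rfl, -⟩ <;> contradiction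

theorem adj_of_addEdge_adj_of_ne_right (h : (G.addEdge u v).Adj x y) (hu : y ≠ u)
    (hv : y ≠ v) : G.Adj x y :=
  (adj_of_addEdge_adj_of_ne_left h.symm hu hv).symm

theorem induce_addEdge_of_notMem {s : Set V} (hv : v ∉ s) :
    (G.addEdge u v).induce s = G.induce s := by
  ext ⟨x, hx⟩ ⟨y, hy⟩
  simp only [comap_adj, Function.Embedding.coe_subtype]
  refine ⟨fun h => (addEdge_adj.1 h).resolve_right ?_, fun h => le_addEdge G u v h⟩
  rintro ⟨he, -⟩
  rcases Sym2.eq_iff.1 he with ⟨-, rfl⟩ | ⟨rfl, -⟩ <;> contradiction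

theorem IsCDS.dominates_of_addEdge {D : Set V} (hD : (G.addEdge u v).IsCDS D) (hu : u ∈ D)
    (hy : y ≠ v) : y ∈ D ∨ ∃ d ∈ D, G.Adj d y := by
  rcases hD.1 y with hyD | ⟨d, hd, hdy⟩
  · exact Or.inl hyD
  rcases addEdge_adj.1 hdy with hdy | ⟨he, -⟩
  · exact Or.inr ⟨d, hd, hdy⟩
  rcases Sym2.eq_iff.1 he with ⟨-, rfl⟩ | ⟨-, rfl⟩
  exacts [absurd rfl hy, Or.inl hu]

theorem IsCDS.of_addEdge_of_notMem {D : Set V} (hD : (G.addEdge u v).IsCDS D) (hu : u ∉ D)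
    (hv : v ∉ D) : G.IsCDS D := by
  refine ⟨fun y => ?_, induce_addEdge_of_notMem hv ▸ hD.2⟩
  rcases hD.1 y with hyD | ⟨d, hd, hdy⟩
  · exact Or.inl hyD
  · exact Or.inr ⟨d, hd, adj_of_addEdge_adj_of_ne_left hdy (ne_of_mem_of_not_mem hd hu)
      (ne_of_mem_of_not_mem hd hv)⟩

theorem IsCDS.of_addEdge_of_adj {D : Set V} (hD : (G.addEdge u v).IsCDS D) (hu : u ∈ D)
    (hv : v ∉ D) (hdv : ∃ d ∈ D, G.Adj d v) : G.IsCDS D := by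
  refine ⟨fun y => ?_, induce_addEdge_of_notMem hv ▸ hD.2⟩
  obtain rfl | hy := eq_or_ne y v
  · exact Or.inr hdv
  · exact hD.dominates_of_addEdge hu hy

theorem IsCDS.not_subset_of_addEdge {A B D : Finset V} (hdisj : Disjoint A B)
    (hsep : ∀ x ∈ A, ∀ y ∈ B, ¬G.Adj x y) (hB : 2 ≤ B.card) (huA : u ∈ A)
    (hD : (G.addEdge u v).IsCDS ↑D) : ¬D ⊆ A := by
  intro hDA
  obtain ⟨y, hyB, hyv⟩ := exists_mem_ne hB v
  have hyu : y ≠ u := ne_of_mem_of_not_mem hyB (Finset.disjoint_left.1 hdisj huA)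
  rcases hD.1 y with hyD | ⟨d, hd, hdy⟩
  · exact Finset.disjoint_left.1 hdisj (hDA hyD) hyB
  · exact hsep d (hDA hd) y hyB (adj_of_addEdge_adj_of_ne_right hdy hyu hyv)

section Critical

variable [Fintype V]

theorem IsCritical3.three_le_card (hG : G.IsCritical3) {D : Finset V} (hD : G.IsCDS ↑D) :
    3 ≤ D.card :=
  hG.2.1 ▸ Nat.sInf_le ⟨D, rfl, hD⟩

theorem IsCritical3.exists_isCDS_addEdge (hG : G.IsCritical3) (huv : u ≠ v) (h : ¬G.Adj u v) :
    ∃ D : Finset V, D.card ≤ 2 ∧ (G.addEdge u v).IsCDS ↑D := by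
  have huniv : (G.addEdge u v).IsCDS ↑(univ : Finset V) := by
    refine ⟨fun y => Or.inl (mem_univ y), ?_⟩
    rw [coe_univ]
    exact (induceUnivIso _).connected_iff.2 (hG.1.mono (le_addEdge G u v))
  obtain ⟨D, hD, hcds⟩ := Nat.sInf_mem (s := {n | ∃ D : Finset V, D.card = n ∧
    (G.addEdge u v).IsCDS ↑D}) ⟨_, univ, rfl, huniv⟩
  exact ⟨D, by have := hG.2.2 u v huv h; unfold cdn at this; omega, hcds⟩

variable [DecidableEq V] [DecidableRel G.Adj] {S A B I D : Finset V} {a b c : V}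

theorem IsCritical3.exists_mem_sdiff_filter_not_adj_eq_singleton_of_mem (hG : G.IsCritical3)
    (hpart : ∀ z ∉ S, z ∈ A ∨ z ∈ B) (hdisj : Disjoint A B)
    (hsep : ∀ x ∈ A, ∀ y ∈ B, ¬G.Adj x y) (hB : 2 ≤ B.card) (hI : G.IsIndepSet' ↑I)
    (ha : a ∈ I) (hb : b ∈ I) (hc : c ∈ I) (hab : a ≠ b) (hca : c ≠ a) (hcb : c ≠ b)
    (haA : a ∈ A) (hD : (G.addEdge a b).IsCDS ↑D) (hDcard : D.card ≤ 2) (haD : a ∈ D) :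
    ∃ t ∈ S \ I, {x ∈ I | ¬G.Adj t x} = {b} := by
  obtain rfl | ⟨t, hta, rfl⟩ := eq_singleton_or_eq_pair_of_card_le_two haD hDcard
  · exact (hD.not_subset_of_addEdge hdisj hsep hB haA (singleton_subset_iff.2 haA)).elim
  have hdom : ∀ x ∈ I, x ≠ a → x ≠ b → x = t ∨ G.Adj t x := by
    intro x hx hxa hxb
    rcases hD.dominates_of_addEdge (by simp) hxb with hxD | ⟨d, hd, hdx⟩
    · exact Or.inl (by simpa [hxa] using hxD)
    · simp only [coe_insert, coe_singleton, Set.mem_insert_iff, Set.mem_singleton_iff] at hd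
      rcases hd with rfl | rfl
      exacts [absurd hdx (hI ha hx hxa.symm), Or.inr hdx]
  have htb : t ≠ b := by
    rintro rfl
    rcases hdom c hc hca hcb with rfl | hbc
    exacts [hcb rfl, hI hb hc hcb.symm hbc]
  have hat : G.Adj a t := by
    refine adj_of_addEdge_adj_of_ne_right ?_ hta htb
    exact Connected.adj_of_induce_pair (by rw [← coe_pair]; exact hD.2) hta.symm
  have htI : t ∉ I := fun htI => hI ha htI hta.symm hat
  have htS : t ∈ S := by
    by_contra htS
    have htA : t ∈ A := (hpart t htS).resolve_right (hsep a haA t · hat)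
    exact hD.not_subset_of_addEdge hdisj hsep hB haA
      (insert_subset haA (singleton_subset_iff.2 htA))
  have htb' : ¬G.Adj t b := by
    intro htb'
    have := hG.three_le_card (hD.of_addEdge_of_adj (by simp) (by simp [hab.symm, htb.symm])
      ⟨t, by simp, htb'⟩)
    rw [card_pair hta.symm] at this
    omega
  refine ⟨t, mem_sdiff.2 ⟨htS, htI⟩, ext fun x => ?_⟩
  simp only [mem_filter, mem_singleton]
  refine ⟨fun ⟨hx, hnx⟩ => by_contra fun hxb => ?_, by rintro rfl; exact ⟨hb, htb'⟩⟩
  obtain rfl | hxa := eq_or_ne x a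
  · exact hnx hat.symm
  rcases hdom x hx hxa hxb with rfl | htx
  exacts [htI hx, hnx htx]

variable {H1 H2 : Finset V}

theorem IsCritical3.exists_mem_sdiff_filter_not_adj_eq_singleton_of_mem_union (hG : G.IsCritical3)
    (hpart : ∀ z ∉ S, z ∈ H1 ∨ z ∈ H2) (hdisj : Disjoint H1 H2)
    (hsep : ∀ x ∈ H1, ∀ y ∈ H2, ¬G.Adj x y) (h1 : 2 ≤ H1.card) (h2 : 2 ≤ H2.card)
    (hI : G.IsIndepSet' ↑I) (ha : a ∈ I ∩ (H1 ∪ H2)) (hb : b ∈ I) (hc : c ∈ I) (hab : a ≠ b)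
    (hca : c ≠ a) (hcb : c ≠ b) (hD : (G.addEdge a b).IsCDS ↑D) (hDcard : D.card ≤ 2)
    (haD : a ∈ D) : ∃ t ∈ S \ I, {x ∈ I | ¬G.Adj t x} = {b} := by
  obtain ⟨haI, haH1 | haH2⟩ := mem_inter.1 ha |>.imp_right mem_union.1
  · exact hG.exists_mem_sdiff_filter_not_adj_eq_singleton_of_mem hpart
      hdisj hsep h2 hI haI hb hc hab hca hcb haH1 hD hDcard haD
  · exact hG.exists_mem_sdiff_filter_not_adj_eq_singleton_of_mem
      (fun z hz => (hpart z hz).symm) hdisj.symm (fun x hx y hy hxy => hsep y hy x hx hxy.symm)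
      h1 hI haI hb hc hab hca hcb haH2 hD hDcard haD

theorem IsCritical3.exists_mem_sdiff_filter_not_adj_eq_singleton (hG : G.IsCritical3)
    (hpart : ∀ z ∉ S, z ∈ H1 ∨ z ∈ H2) (hdisj : Disjoint H1 H2)
    (hsep : ∀ x ∈ H1, ∀ y ∈ H2, ¬G.Adj x y) (h1 : 2 ≤ H1.card) (h2 : 2 ≤ H2.card)
    (hI : G.IsIndepSet' ↑I) (ha : a ∈ I ∩ (H1 ∪ H2)) (hb : b ∈ I ∩ (H1 ∪ H2)) (hc : c ∈ I)
    (hab : a ≠ b) (hca : c ≠ a) (hcb : c ≠ b) :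
    ∃ t ∈ S \ I, {x ∈ I | ¬G.Adj t x} = {a} ∨ {x ∈ I | ¬G.Adj t x} = {b} := by
  have haI := (mem_inter.1 ha).1
  have hbI := (mem_inter.1 hb).1
  obtain ⟨D, hDcard, hD⟩ := hG.exists_isCDS_addEdge hab (hI haI hbI hab)
  by_cases haD : a ∈ D
  · obtain ⟨t, ht, hta⟩ := hG.exists_mem_sdiff_filter_not_adj_eq_singleton_of_mem_union hpart
      hdisj hsep h1 h2 hI ha hbI hc hab hca hcb hD hDcard haD
    exact ⟨t, ht, Or.inr hta⟩
  by_cases hbD : b ∈ D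
  · rw [addEdge_comm] at hD
    obtain ⟨t, ht, htb⟩ := hG.exists_mem_sdiff_filter_not_adj_eq_singleton_of_mem_union hpart
      hdisj hsep h1 h2 hI hb haI hc hab.symm hcb hca hD hDcard hbD
    exact ⟨t, ht, Or.inl htb⟩
  have := hG.three_le_card (hD.of_addEdge_of_notMem (by simpa) (by simpa))
  omega

end Critical

end SimpleGraph

theorem stmt_5_general {V : Type*} [Fintype V] [DecidableEq V] (G : SimpleGraph V)
    (hG : G.IsCritical3) (S H1 H2 I : Finset V)
    (hpart : ∀ z : V, z ∉ S ↔ (z ∈ H1 ∨ z ∈ H2))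
    (hdisj : Disjoint H1 H2)
    (hsep : ∀ a ∈ H1, ∀ b ∈ H2, ¬G.Adj a b)
    (h1 : 2 ≤ H1.card) (h2 : 2 ≤ H2.card)
    (hI : G.IsIndepSet' ↑I)
    (p : ℕ) (hp : (I ∩ (H1 ∪ H2)).card = p) (hp3 : 3 ≤ p) :
    p - 1 ≤ (S \ I).card := by
  classical
  suffices (I ∩ (H1 ∪ H2)).card ≤ (S \ I).card + 1 by omega
  refine card_le_card_add_one_of_forall_pair _ _ (fun t => {x ∈ I | ¬G.Adj t x})
    fun a ha b hb hab => ?_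
  obtain ⟨c, hc, hcb⟩ := exists_mem_ne (s := (I ∩ (H1 ∪ H2)).erase a)
    (by rw [card_erase_of_mem ha]; omega) b
  exact hG.exists_mem_sdiff_filter_not_adj_eq_singleton (fun z => (hpart z).1) hdisj hsep h1 h2
    hI ha hb (mem_inter.1 (mem_of_mem_erase hc)).1 hab (ne_of_mem_erase hc) hcb

theorem stmt_5 {V : Type*} [Fintype V] [DecidableEq V] (G : SimpleGraph V)
    (hG : G.IsCritical3) (S H1 H2 I : Finset V)
    (hcut : G.IsVertexCut S) (hmins : S.card = G.conn)
    (hpart : ∀ z : V, z ∉ S ↔ (z ∈ H1 ∨ z ∈ H2))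
    (hdisj : Disjoint H1 H2)
    (hsep : ∀ a ∈ H1, ∀ b ∈ H2, ¬G.Adj a b)
    (h1 : 2 ≤ H1.card) (h2 : 2 ≤ H2.card)
    (hI : G.IsIndepSet' ↑I)
    (p : ℕ) (hp : (I ∩ (H1 ∪ H2)).card = p) (hp3 : 3 ≤ p) :
    p - 1 ≤ (S \ I).card :=
  stmt_5_general G hG S H1 H2 I hpart hdisj hsep h1 h2 hI p hp hp3
end

section
/- Let G be a graph in the family 𝒢₁(b₀, 1, 1, ..., 1) (i.e., b_i = 1 for 1 ≤ i ≤ s−1). Then B₁ ∪ ... ∪ B_{s−1} is a minimum vertex cut of size s − 1 and {a₀, a₁, ..., a_s} is a maximum independent set of size s + 1; hence α(G) = κ(G) + 2. -/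
open SimpleGraph Finset

variable {V : Type*}

/-- One-sided description of the edges in the family `𝒢₁(b₀, …, b_{s-1})`.
`A i` (for `0 ≤ i ≤ s`) are the vertices `aᵢ`, `B j` (for `0 ≤ j ≤ s-1`) the sets `Bⱼ`,
`x` the special vertex, and `bb` the fixed vertex `b ∈ B₀`. -/
def G1Half {V : Type*} (s : ℕ) (A : ℕ → V) (B : ℕ → Finset V) (x bb : V) (p q : V) : Prop :=
  (p = A 0 ∧ (q = x ∨ ∃ j < s, q ∈ B j)) ∨
  (∃ i, 1 ≤ i ∧ i ≤ s - 1 ∧ p = A i ∧ (q = x ∨ ∃ j < s, j ≠ i ∧ q ∈ B j)) ∨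
  (p = A s ∧ ∃ j, 1 ≤ j ∧ j ≤ s - 1 ∧ q ∈ B j) ∨
  (p = x ∧ q ≠ bb ∧ q ≠ x ∧ q ≠ A s) ∨
  ((∃ j, 1 ≤ j ∧ j ≤ s - 1 ∧ p ∈ B j) ∧ (∃ k, 1 ≤ k ∧ k ≤ s - 1 ∧ q ∈ B k)) ∨
  (p ∈ B 0 ∧ q ∈ B 0)

/-- `G` is the graph in the family `𝒢₁(b₀, …, b_{s-1})` built from the given data. -/
def SimpleGraph.G1Witness {V : Type*} (G : SimpleGraph V)
    (s : ℕ) (A : ℕ → V) (B : ℕ → Finset V) (x bb : V) : Prop :=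
  2 ≤ s ∧
  (∀ i ≤ s, ∀ j ≤ s, A i = A j → i = j) ∧
  (∀ j < s, (B j).Nonempty) ∧
  (∀ i < s, ∀ j < s, i ≠ j → Disjoint (B i) (B j)) ∧
  (∀ i ≤ s, ∀ j < s, A i ∉ B j) ∧
  (∀ j < s, x ∉ B j) ∧ (∀ i ≤ s, x ≠ A i) ∧
  bb ∈ B 0 ∧
  (∀ z : V, (∃ i ≤ s, z = A i) ∨ (∃ j < s, z ∈ B j) ∨ z = x) ∧
  ∀ p q : V, G.Adj p q ↔ p ≠ q ∧ (G1Half s A B x bb p q ∨ G1Half s A B x bb q p)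

/-!
Let `T = B₁ ∪ ⋯ ∪ B_{s-1}`, a clique of `s - 1` vertices. Every neighbour of `a_s` lies in `T`,
so `T` separates `a_s` from `x`. If fewer than `s - 1` vertices are removed, some `c ∈ T`
survives, and every other vertex is adjacent to `c` or has `s - 1` common neighbours with it
(`x` and `T \ {c}` for `a_j` where `B_j = {c}`; the `aᵢ` with `i < s`, `i ≠ j` for `B₀`), one of
which survives; hence `κ = s - 1`. The `aᵢ` are pairwise non-adjacent, and the cliques
`{a₀} ∪ B₀`, `{aᵢ} ∪ Bᵢ₊₁` (`0 < i < s - 1`), `{a_{s-1}, x}`, `{a_s} ∪ B₁` cover the graph, so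
`α = s + 1`.
-/

theorem Finset.mem_biUnion_Ioo {α : Type*} [DecidableEq α] {n : ℕ} {B : ℕ → Finset α} {w : α} :
    w ∈ (Ioo 0 n).biUnion B ↔ ∃ j, 0 < j ∧ j < n ∧ w ∈ B j := by
  simp only [mem_biUnion, mem_Ioo, and_assoc]

namespace SimpleGraph

variable {G : SimpleGraph V}

theorem IsIndepSet.card_le_of_subset_biUnion [DecidableEq V] {ι : Type*} {I : Finset V}
    (hI : G.IsIndepSet I) {t : Finset ι} {C : ι → Finset V}
    (hC : ∀ i ∈ t, G.IsClique (C i : Set V)) (hIC : I ⊆ t.biUnion C) : #I ≤ #t := by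
  calc #I = #(t.biUnion fun i ↦ I ∩ C i) := by rw [← inter_biUnion, inter_eq_left.2 hIC]
    _ ≤ ∑ i ∈ t, #(I ∩ C i) := card_biUnion_le
    _ ≤ ∑ _i ∈ t, 1 := sum_le_sum fun i hi ↦ card_le_one.2 fun a ha b hb ↦ by
        by_contra hab
        simp only [mem_inter] at ha hb
        exact hI ha.1 hb.1 hab (hC i hi ha.2 hb.2 hab)
    _ = #t := by simp

theorem not_reachable_of_forall_not_adj {u v : V} (huv : u ≠ v) (hv : ∀ w, ¬G.Adj v w) :
    ¬G.Reachable u v := by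
  rintro ⟨p⟩
  cases p.reverse with
  | nil => exact huv rfl
  | cons hadj _ => exact hv _ hadj

theorem conn_eq_card [Fintype V] {S : Finset V} (hS : G.IsVertexCut S)
    (hconn : ∀ S' : Finset V, #S' < #S → (G.induce (S' : Set V)ᶜ).Connected) : G.conn = #S :=
  le_antisymm (Nat.sInf_le ⟨S, rfl, hS⟩) <| le_csInf ⟨_, S, rfl, hS⟩
    fun _ ⟨S', hS', hcut⟩ ↦ hS' ▸ not_lt.1 fun hlt ↦ hcut (hconn S' hlt)

theorem indepNum'_eq_card [Fintype V] {I : Finset V} (hI : G.IsIndepSet' I)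
    (hmax : ∀ J : Finset V, G.IsIndepSet' J → #J ≤ #I) : G.indepNum' = #I :=
  le_antisymm (csSup_le ⟨_, I, hI, rfl⟩ fun _ ⟨J, hJ, hn⟩ ↦ hn ▸ hmax J hJ)
    (le_csSup ⟨#I, fun _ ⟨J, hJ, hn⟩ ↦ hn ▸ hmax J hJ⟩ ⟨I, hI, rfl⟩)

theorem reachable_induce_compl_of_card_lt {S N : Finset V} {u w : V} (hu : u ∉ S) (hw : w ∉ S)
    (hN : ∀ v ∈ N, G.Adj u v ∧ G.Adj v w) (hSN : #S < #N) :
    (G.induce (S : Set V)ᶜ).Reachable ⟨u, hu⟩ ⟨w, hw⟩ := by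
  obtain ⟨v, hvN, hvS⟩ := exists_mem_notMem_of_card_lt_card hSN
  have huv : (G.induce (S : Set V)ᶜ).Adj ⟨u, hu⟩ ⟨v, hvS⟩ := (hN v hvN).1
  have hvw : (G.induce (S : Set V)ᶜ).Adj ⟨v, hvS⟩ ⟨w, hw⟩ := (hN v hvN).2
  exact huv.reachable.trans hvw.reachable

end SimpleGraph

def G1CliqueCover [DecidableEq V] (s : ℕ) (A : ℕ → V) (B : ℕ → Finset V) (x : V) (i : ℕ) :
    Finset V :=
  if i = 0 then insert (A 0) (B 0)
  else if i = s then insert (A s) (B 1)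
  else if i = s - 1 then {A i, x}
  else insert (A i) (B (i + 1))

namespace SimpleGraph.G1Witness

variable {G : SimpleGraph V} {s : ℕ} {A : ℕ → V} {B : ℕ → Finset V} {x bb : V}
  (h : G.G1Witness s A B x bb)
include h

theorem two_le : 2 ≤ s := h.1

theorem A_injective {i j : ℕ} (hi : i ≤ s) (hj : j ≤ s) (hij : A i = A j) : i = j :=
  h.2.1 i hi j hj hij

theorem disjoint_B {i j : ℕ} (hi : i < s) (hj : j < s) (hij : i ≠ j) : Disjoint (B i) (B j) :=
  h.2.2.2.1 i hi j hj hij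

theorem A_notMem_B {i j : ℕ} (hi : i ≤ s) (hj : j < s) : A i ∉ B j := h.2.2.2.2.1 i hi j hj

theorem x_notMem_B {j : ℕ} (hj : j < s) : x ∉ B j := h.2.2.2.2.2.1 j hj

theorem x_ne_A {i : ℕ} (hi : i ≤ s) : x ≠ A i := h.2.2.2.2.2.2.1 i hi

theorem bb_mem : bb ∈ B 0 := h.2.2.2.2.2.2.2.1

theorem cover (z : V) : (∃ i ≤ s, z = A i) ∨ (∃ j < s, z ∈ B j) ∨ z = x :=
  h.2.2.2.2.2.2.2.2.1 z

theorem adj_iff (p q : V) :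
    G.Adj p q ↔ p ≠ q ∧ (G1Half s A B x bb p q ∨ G1Half s A B x bb q p) :=
  h.2.2.2.2.2.2.2.2.2 p q

theorem adj_A_B_zero {i : ℕ} (hi : i < s) {c : V} (hc : c ∈ B 0) : G.Adj (A i) c := by
  refine (h.adj_iff _ _).2 ⟨fun he ↦ h.A_notMem_B hi.le (by omega) (he ▸ hc), Or.inl ?_⟩
  unfold G1Half
  grind

theorem adj_A_B_pos {i j : ℕ} (hi : i ≤ s) (hj0 : 0 < j) (hj : j < s) (hij : i ≠ j) {c : V}
    (hc : c ∈ B j) : G.Adj (A i) c := by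
  refine (h.adj_iff _ _).2 ⟨fun he ↦ h.A_notMem_B hi hj (he ▸ hc), Or.inl ?_⟩
  unfold G1Half
  grind

theorem adj_A_x {i : ℕ} (hi : i < s) : G.Adj (A i) x := by
  refine (h.adj_iff _ _).2 ⟨fun he ↦ h.x_ne_A hi.le he.symm, Or.inl ?_⟩
  unfold G1Half
  grind

theorem adj_x_of_mem_B {j : ℕ} (hj0 : 0 < j) (hj : j < s) {c : V} (hc : c ∈ B j) :
    G.Adj x c := by
  have hcbb : c ≠ bb := fun he ↦
    Finset.disjoint_left.1 (h.disjoint_B hj (by omega) (by omega)) hc (he ▸ h.bb_mem)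
  have hcA : c ≠ A s := fun he ↦ h.A_notMem_B le_rfl hj (he ▸ hc)
  have hcx : c ≠ x := fun he ↦ h.x_notMem_B hj (he ▸ hc)
  refine (h.adj_iff _ _).2 ⟨hcx.symm, Or.inl ?_⟩
  unfold G1Half
  grind

theorem adj_B_pos {j k : ℕ} (hj0 : 0 < j) (hj : j < s) (hk0 : 0 < k) (hk : k < s) {c c' : V}
    (hc : c ∈ B j) (hc' : c' ∈ B k) (hne : c ≠ c') : G.Adj c c' := by
  refine (h.adj_iff _ _).2 ⟨hne, Or.inl ?_⟩
  unfold G1Half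
  grind

theorem adj_B_zero {c c' : V} (hc : c ∈ B 0) (hc' : c' ∈ B 0) (hne : c ≠ c') : G.Adj c c' := by
  refine (h.adj_iff _ _).2 ⟨hne, Or.inl ?_⟩
  unfold G1Half
  grind

theorem not_adj_A_A {i j : ℕ} (hi : i ≤ s) (hj : j ≤ s) : ¬G.Adj (A i) (A j) := by
  have hAiB := fun k (hk : k < s) ↦ h.A_notMem_B hi hk
  have hAjB := fun k (hk : k < s) ↦ h.A_notMem_B hj hk
  have hxAi := h.x_ne_A hi
  have hxAj := h.x_ne_A hj
  have hs := h.two_le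
  rw [h.adj_iff]
  unfold G1Half
  grind

theorem mem_B_of_adj_A_last {w : V} (hw : G.Adj (A s) w) : ∃ j, 0 < j ∧ j < s ∧ w ∈ B j := by
  have hAB := fun k (hk : k < s) ↦ h.A_notMem_B le_rfl hk
  have hxA := h.x_ne_A le_rfl
  have hAA := fun k (hk : k ≤ s) ↦ h.A_injective le_rfl hk
  have hs := h.two_le
  rw [h.adj_iff] at hw
  unfold G1Half at hw
  grind

theorem card_biUnion_Ioo_B [DecidableEq V]
    (hb : ∀ j, 1 ≤ j → j < s → #(B j) = 1) : #((Ioo 0 s).biUnion B) = s - 1 := by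
  rw [card_biUnion fun i hi j hj ↦ h.disjoint_B (mem_Ioo.1 hi).2 (mem_Ioo.1 hj).2,
    sum_congr rfl fun j hj ↦ hb j (mem_Ioo.1 hj).1 (mem_Ioo.1 hj).2]
  simp

theorem isVertexCut_biUnion_Ioo_B [Fintype V] [DecidableEq V] :
    G.IsVertexCut ((Ioo 0 s).biUnion B) := by
  have hx : x ∉ (Ioo 0 s).biUnion B := fun hx ↦
    let ⟨_, _, hj, hxj⟩ := mem_biUnion_Ioo.1 hx; h.x_notMem_B hj hxj
  have hA : A s ∉ (Ioo 0 s).biUnion B := fun hA ↦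
    let ⟨_, _, hj, hAj⟩ := mem_biUnion_Ioo.1 hA; h.A_notMem_B le_rfl hj hAj
  intro hconn
  refine not_reachable_of_forall_not_adj (u := ⟨x, hx⟩) (v := ⟨A s, hA⟩)
    (fun he ↦ h.x_ne_A le_rfl (congrArg Subtype.val he)) ?_ (hconn.preconnected _ _)
  rintro ⟨w, hw⟩ hadj
  exact hw (mem_biUnion_Ioo.2 (h.mem_B_of_adj_A_last hadj))

theorem injOn_A : Set.InjOn A ↑(range (s + 1)) := fun _ hi _ hj ↦
  h.A_injective (Nat.lt_succ_iff.1 (mem_range.1 hi)) (Nat.lt_succ_iff.1 (mem_range.1 hj))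

theorem exists_commonNbrs_A [DecidableEq V] (hb : ∀ j, 1 ≤ j → j < s → #(B j) = 1) {j : ℕ}
    (hj0 : 0 < j) (hj : j < s) {c : V} (hc : c ∈ B j) :
    ∃ N : Finset V, #N = s - 1 ∧ ∀ v ∈ N, G.Adj (A j) v ∧ G.Adj v c := by
  have hcT : c ∈ (Ioo 0 s).biUnion B := mem_biUnion_Ioo.2 ⟨j, hj0, hj, hc⟩
  have hxT : x ∉ ((Ioo 0 s).biUnion B).erase c := fun hx ↦
    let ⟨_, _, hk, hxk⟩ := mem_biUnion_Ioo.1 (mem_of_mem_erase hx); h.x_notMem_B hk hxk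
  refine ⟨insert x (((Ioo 0 s).biUnion B).erase c), ?_, ?_⟩
  · rw [card_insert_of_notMem hxT, card_erase_of_mem hcT, h.card_biUnion_Ioo_B hb]
    have := h.two_le
    omega
  · simp only [mem_insert, mem_erase, mem_biUnion_Ioo]
    rintro v (rfl | ⟨hvc, k, hk0, hk, hv⟩)
    · exact ⟨h.adj_A_x hj, h.adj_x_of_mem_B hj0 hj hc⟩
    · have hkj : k ≠ j := by
        rintro rfl
        exact hvc (card_le_one.1 (hb k hk0 hk).le v hv c hc)
      exact ⟨h.adj_A_B_pos hj.le hk0 hk hkj.symm hv, h.adj_B_pos hk0 hk hj0 hj hv hc hvc⟩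

theorem exists_commonNbrs_B_zero [DecidableEq V] {j : ℕ} (hj0 : 0 < j) (hj : j < s) {c w : V}
    (hc : c ∈ B j) (hw : w ∈ B 0) :
    ∃ N : Finset V, #N = s - 1 ∧ ∀ v ∈ N, G.Adj w v ∧ G.Adj v c := by
  refine ⟨((range s).erase j).image A, ?_, ?_⟩
  · rw [card_image_of_injOn (h.injOn_A.mono fun i hi ↦ by simp at hi ⊢; omega),
      card_erase_of_mem (mem_range.2 hj), card_range]
  · simp only [mem_image, mem_erase, mem_range]
    rintro _ ⟨i, ⟨hij, hi⟩, rfl⟩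
    exact ⟨(h.adj_A_B_zero hi hw).symm, h.adj_A_B_pos hi.le hj0 hj hij hc⟩

theorem eq_or_adj_or_exists_commonNbrs [DecidableEq V] (hb : ∀ j, 1 ≤ j → j < s → #(B j) = 1)
    {j : ℕ} (hj0 : 0 < j) (hj : j < s) {c : V} (hc : c ∈ B j) (w : V) :
    w = c ∨ G.Adj w c ∨ ∃ N : Finset V, #N = s - 1 ∧ ∀ v ∈ N, G.Adj w v ∧ G.Adj v c := by
  rcases h.cover w with ⟨i, hi, rfl⟩ | ⟨k, hk, hw⟩ | rfl
  · rcases eq_or_ne i j with rfl | hij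
    · exact Or.inr (Or.inr (h.exists_commonNbrs_A hb hj0 hj hc))
    · exact Or.inr (Or.inl (h.adj_A_B_pos hi hj0 hj hij hc))
  · rcases Nat.eq_zero_or_pos k with rfl | hk0
    · exact Or.inr (Or.inr (h.exists_commonNbrs_B_zero hj0 hj hc hw))
    rcases eq_or_ne k j with rfl | hkj
    · exact Or.inl (card_le_one.1 (hb k hk0 hk).le w hw c hc)
    · refine Or.inr (Or.inl (h.adj_B_pos hk0 hk hj0 hj hw hc fun he ↦ ?_))
      exact Finset.disjoint_left.1 (h.disjoint_B hk hj hkj) hw (he ▸ hc)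
  · exact Or.inr (Or.inl (h.adj_x_of_mem_B hj0 hj hc))

theorem connected_induce_compl [DecidableEq V] (hb : ∀ j, 1 ≤ j → j < s → #(B j) = 1)
    {S : Finset V} (hS : #S < s - 1) : (G.induce (S : Set V)ᶜ).Connected := by
  obtain ⟨c, hcT, hcS⟩ := exists_mem_notMem_of_card_lt_card (hS.trans_eq (h.card_biUnion_Ioo_B hb).symm)
  obtain ⟨j, hj0, hj, hc⟩ := mem_biUnion_Ioo.1 hcT
  refine (connected_iff_exists_forall_reachable _).2 ⟨⟨c, hcS⟩, fun ⟨w, hw⟩ ↦ Reachable.symm ?_⟩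
  rcases h.eq_or_adj_or_exists_commonNbrs hb hj0 hj hc w with rfl | hwc | ⟨N, hN, hNadj⟩
  · rfl
  · exact Adj.reachable (G := G.induce _) hwc
  · exact reachable_induce_compl_of_card_lt hw hcS hNadj (hN ▸ hS)

theorem isClique_B_zero : G.IsClique (B 0 : Set V) := fun _ hc _ hc' ↦ h.adj_B_zero hc hc'

theorem isClique_B_pos {j : ℕ} (hj0 : 0 < j) (hj : j < s) : G.IsClique (B j : Set V) :=
  fun _ hc _ hc' ↦ h.adj_B_pos hj0 hj hj0 hj hc hc'

theorem isClique_cliqueCover [DecidableEq V] {i : ℕ} (hi : i ≤ s) :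
    G.IsClique (G1CliqueCover s A B x i : Set V) := by
  have hs := h.two_le
  unfold G1CliqueCover
  split_ifs with hi0 his his1
  · subst hi0
    rw [coe_insert, isClique_insert]
    exact ⟨h.isClique_B_zero, fun c hc _ ↦ h.adj_A_B_zero (by omega) hc⟩
  · subst his
    rw [coe_insert, isClique_insert]
    exact ⟨h.isClique_B_pos one_pos (by omega),
      fun c hc _ ↦ h.adj_A_B_pos le_rfl one_pos (by omega) (by omega) hc⟩
  · rw [coe_pair]
    exact isClique_pair.2 fun _ ↦ h.adj_A_x (by omega)
  · rw [coe_insert, isClique_insert]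
    exact ⟨h.isClique_B_pos (by omega) (by omega),
      fun c hc _ ↦ h.adj_A_B_pos hi (by omega) (by omega) (by omega) hc⟩

theorem exists_mem_cliqueCover [DecidableEq V] (v : V) :
    ∃ i ≤ s, v ∈ G1CliqueCover s A B x i := by
  have hs := h.two_le
  rcases h.cover v with ⟨i, hi, rfl⟩ | ⟨j, hj, hv⟩ | rfl
  · refine ⟨i, hi, ?_⟩
    unfold G1CliqueCover
    split_ifs <;> simp_all
  · rcases j with _ | _ | j
    · exact ⟨0, by omega, by simp [G1CliqueCover, hv]⟩
    · refine ⟨s, le_rfl, ?_⟩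
      rw [G1CliqueCover, if_neg (by omega), if_pos rfl]
      exact mem_insert_of_mem hv
    · refine ⟨j + 1, by omega, ?_⟩
      rw [G1CliqueCover, if_neg (by omega), if_neg (by omega), if_neg (by omega)]
      exact mem_insert_of_mem hv
  · refine ⟨s - 1, by omega, ?_⟩
    rw [G1CliqueCover, if_neg (by omega), if_neg (by omega), if_pos rfl]
    exact mem_insert_of_mem (mem_singleton_self _)

theorem card_le_of_isIndepSet [DecidableEq V] {I : Finset V} (hI : G.IsIndepSet I) :
    #I ≤ s + 1 := by
  simpa using hI.card_le_of_subset_biUnion (t := range (s + 1))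
    (fun i hi ↦ h.isClique_cliqueCover (Nat.lt_succ_iff.1 (mem_range.1 hi)))
    fun v _ ↦ mem_biUnion.2 <|
      let ⟨i, hi, hv⟩ := h.exists_mem_cliqueCover v; ⟨i, mem_range.2 (Nat.lt_succ_of_le hi), hv⟩

theorem isIndepSet_image_A [DecidableEq V] : G.IsIndepSet ((range (s + 1)).image A : Set V) := by
  rw [coe_image]
  rintro _ ⟨i, hi, rfl⟩ _ ⟨j, hj, rfl⟩ -
  exact h.not_adj_A_A (Nat.lt_succ_iff.1 (mem_range.1 hi)) (Nat.lt_succ_iff.1 (mem_range.1 hj))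

theorem card_image_A [DecidableEq V] : #((range (s + 1)).image A) = s + 1 := by
  rw [card_image_of_injOn h.injOn_A, card_range]

end SimpleGraph.G1Witness

theorem stmt_13 {V : Type*} [Fintype V] [DecidableEq V] (G : SimpleGraph V)
    (s : ℕ) (A : ℕ → V) (B : ℕ → Finset V) (x bb : V)
    (h : G.G1Witness s A B x bb)
    (hb : ∀ j, 1 ≤ j → j < s → (B j).card = 1) :
    G.IsVertexCut ((Finset.Ioo 0 s).biUnion B) ∧
      ((Finset.Ioo 0 s).biUnion B).card = s - 1 ∧
      ((Finset.Ioo 0 s).biUnion B).card = G.conn ∧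
      G.IsIndepSet' ↑((Finset.range (s + 1)).image A) ∧
      ((Finset.range (s + 1)).image A).card = s + 1 ∧
      ((Finset.range (s + 1)).image A).card = G.indepNum' ∧
      G.indepNum' = G.conn + 2 := by
  have hcut := h.card_biUnion_Ioo_B hb
  have hconn : G.conn = s - 1 := (conn_eq_card h.isVertexCut_biUnion_Ioo_B
    fun _ hS ↦ h.connected_induce_compl hb (hS.trans_eq hcut)).trans hcut
  have hα : G.indepNum' = s + 1 := (indepNum'_eq_card h.isIndepSet_image_A
    fun _ hJ ↦ (h.card_le_of_isIndepSet hJ).trans_eq h.card_image_A.symm).trans h.card_image_A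
  refine ⟨h.isVertexCut_biUnion_Ioo_B, hcut, hcut.trans hconn.symm, h.isIndepSet_image_A, h.card_image_A,
    h.card_image_A.trans hα.symm, ?_⟩
  have := h.two_le
  omega
end
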